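/- Let Λ₀ be an even unimodular negative-definite lattice of rank 24 containing no vectors of norm −2 (a Leech lattice), and let L = U ⊕ Λ₀, where U is the even hyperbolic lattice of rank 2 with basis f, z satisfying f² = 0, ⟨f,z⟩ = 1, z² = −2. Write [s, t, y] := s·f + t·z + y for s, t ∈ ℝ and y ∈ Λ₀⊗ℝ, and let P_L be the positive cone of L containing 2f + z. For λ ∈ Λ₀ set r_λ := [−λ²/2, 1, λ]. Suppose u ∈ L⊗ℝ is nonzero, lies in the closure of P_L, satisfies u² = 0, and satisfies ⟨u, r_λ⟩ ≥ 0 for all λ ∈ Λ₀. Then either u ∈ ℝ_{≥0}·f, or there exist t > 0 and c ∈ Λ₀⊗ℝ with −(c − λ)² ≥ 2 for all λ ∈ Λ₀ (i.e. c is a deep hole of Λ₀) such that u = t·[−c²/2 + 1, 1, c]. -/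
import Mathlib


namespace K3Aut

variable {n : ℕ}

/-- The real symmetric bilinear pairing on `L ⊗ ℝ = ℝⁿ` determined by an
integral Gram matrix `B`. -/
def pair (B : Matrix (Fin n) (Fin n) ℤ) (x y : Fin n → ℝ) : ℝ :=
  ∑ i, ∑ j, x i * (B i j : ℝ) * y j

/-- `x` is a point of the lattice `L` (integer coordinates). -/
def isLat (x : Fin n → ℝ) : Prop := ∀ i, ∃ k : ℤ, x i = (k : ℝ)

/-- `x` has rational coordinates (a point of `L ⊗ ℚ`). -/
def isRatPt (x : Fin n → ℝ) : Prop := ∀ i, ∃ q : ℚ, x i = (q : ℝ)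

/-- `x` is a point of the dual lattice `L∨ ⊆ L ⊗ ℚ`. -/
def isDual (B : Matrix (Fin n) (Fin n) ℤ) (x : Fin n → ℝ) : Prop :=
  isRatPt x ∧ ∀ y : Fin n → ℝ, isLat y → ∃ k : ℤ, pair B x y = (k : ℝ)

/-- The Gram matrix `B` is symmetric, nondegenerate and even. -/
def IsEvenLat (B : Matrix (Fin n) (Fin n) ℤ) : Prop :=
  B.IsSymm ∧ B.det ≠ 0 ∧ ∀ i, Even (B i i)

/-- The form restricted to the subspace `W` is nondegenerate with exactly one
positive direction, i.e. of signature `(1, dim W - 1)`. -/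
def IsHypOn (B : Matrix (Fin n) (Fin n) ℤ) (W : Submodule ℝ (Fin n → ℝ)) : Prop :=
  (∃ x ∈ W, 0 < pair B x x) ∧
  (∀ x ∈ W, ∀ y ∈ W, 0 < pair B x x → 0 < pair B y y →
      pair B x x * pair B y y ≤ pair B x y ^ 2) ∧
  (∀ x ∈ W, (∀ y ∈ W, pair B x y = 0) → x = 0)

/-- The lattice is hyperbolic: rank `n > 1` and signature `(1, n-1)`. -/
def IsHyperbolic (B : Matrix (Fin n) (Fin n) ℤ) : Prop :=
  1 < n ∧ IsHypOn B ⊤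

/-- `P` is a positive cone: a connected component of the set of positive-norm
vectors of `L ⊗ ℝ`. -/
def IsPosCone (B : Matrix (Fin n) (Fin n) ℤ) (P : Set (Fin n → ℝ)) : Prop :=
  ∃ x, 0 < pair B x x ∧ P = connectedComponentIn {y | 0 < pair B y y} x

/-- The hyperplane `(v)⊥` of `P`. -/
def perp (B : Matrix (Fin n) (Fin n) ℤ) (P : Set (Fin n → ℝ)) (v : Fin n → ℝ) :
    Set (Fin n → ℝ) := {x ∈ P | pair B x v = 0}

/-- `V ⊆ {v ∈ L∨ : v² < 0}`. -/
def DualNeg (B : Matrix (Fin n) (Fin n) ℤ) (V : Set (Fin n → ℝ)) : Prop :=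
  ∀ v ∈ V, isDual B v ∧ pair B v v < 0

/-- Condition [V1]: the norms of the vectors of `V` are bounded. -/
def CondV1 (B : Matrix (Fin n) (Fin n) ℤ) (V : Set (Fin n → ℝ)) : Prop :=
  ∃ c : ℝ, 0 < c ∧ ∀ v ∈ V, -pair B v v < c

/-- The cone `Σ_L(Δ)`. -/
def SigmaCone (B : Matrix (Fin n) (Fin n) ℤ) (Δ : Set (Fin n → ℝ)) :
    Set (Fin n → ℝ) :=
  {x | ∀ v ∈ Δ, 0 ≤ pair B x v}

/-- `D` is a `V*`-chamber: the closure in `P` of a connected component of the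
complement in `P` of the hyperplanes `(v)⊥`, `v ∈ V`. -/
def IsChamber (B : Matrix (Fin n) (Fin n) ℤ) (P V D : Set (Fin n → ℝ)) : Prop :=
  ∃ x ∈ P, (∀ v ∈ V, pair B x v ≠ 0) ∧
    D = closure (connectedComponentIn {y ∈ P | ∀ v ∈ V, pair B y v ≠ 0} x) ∩ P

/-- `Δ` is a defining set of the chamber `D`. -/
def IsDefSet (B : Matrix (Fin n) (Fin n) ℤ) (P Δ D : Set (Fin n → ℝ)) : Prop :=
  (∀ v ∈ Δ, isDual B v ∧ pair B v v < 0) ∧ D = SigmaCone B Δ ∩ P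

/-- Condition [V3]: every `V*`-chamber has a finite defining set. -/
def CondV3 (B : Matrix (Fin n) (Fin n) ℤ) (P V : Set (Fin n → ℝ)) : Prop :=
  ∀ D, IsChamber B P V D → ∃ Δ : Set (Fin n → ℝ), Δ.Finite ∧ IsDefSet B P Δ D

/-- Condition [V4]: every boundary point of a `V*`-chamber is rational, i.e.
every nonzero norm-zero vector of the closure of a chamber is a positive real
multiple of a rational vector. -/
def CondV4 (B : Matrix (Fin n) (Fin n) ℤ) (P V : Set (Fin n → ℝ)) : Prop :=
  ∀ D, IsChamber B P V D → ∀ x ∈ closure D, x ≠ 0 → pair B x x = 0 →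
    ∃ t : ℝ, 0 < t ∧ ∃ y, isRatPt y ∧ x = t • y

/-- The action of `GL_n(ℤ)` on `L ⊗ ℝ`. -/
def act (g : (Matrix (Fin n) (Fin n) ℤ)ˣ) (x : Fin n → ℝ) : Fin n → ℝ :=
  ((g : Matrix (Fin n) (Fin n) ℤ).map ((↑) : ℤ → ℝ)).mulVec x

/-- `g` is an isometry of `L` preserving the positive cone `P`,
i.e. an element of `O⁺(L)`. -/
def InOPlus (B : Matrix (Fin n) (Fin n) ℤ) (P : Set (Fin n → ℝ))
    (g : (Matrix (Fin n) (Fin n) ℤ)ˣ) : Prop :=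
  (g : Matrix (Fin n) (Fin n) ℤ).transpose * B * (g : Matrix (Fin n) (Fin n) ℤ) = B ∧
    act g '' P = P

/-- Condition [V2]: `V` is invariant under the action of `G`. -/
def CondV2 (G : Subgroup ((Matrix (Fin n) (Fin n) ℤ)ˣ)) (V : Set (Fin n → ℝ)) : Prop :=
  ∀ g ∈ G, ∀ v ∈ V, act g v ∈ V

/-- `(v)⊥` is a wall of the chamber `D`: it is disjoint from the interior of `D`
and `(v)⊥ ∩ D` contains a nonempty open subset of `(v)⊥`. -/
def IsWall (B : Matrix (Fin n) (Fin n) ℤ) (P : Set (Fin n → ℝ)) (v : Fin n → ℝ)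
    (D : Set (Fin n → ℝ)) : Prop :=
  pair B v v < 0 ∧ perp B P v ∩ interior D = ∅ ∧
  ∃ W : Set (Fin n → ℝ), IsOpen W ∧ (W ∩ perp B P v).Nonempty ∧ W ∩ perp B P v ⊆ D

/-- `D'` is the chamber adjacent to `D` across the wall `(v)⊥`. -/
def IsAdjacent (B : Matrix (Fin n) (Fin n) ℤ) (P V : Set (Fin n → ℝ))
    (D : Set (Fin n → ℝ)) (v : Fin n → ℝ) (D' : Set (Fin n → ℝ)) : Prop :=
  IsChamber B P V D' ∧ D' ≠ D ∧
  ∃ W : Set (Fin n → ℝ), IsOpen W ∧ (W ∩ perp B P v).Nonempty ∧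
    W ∩ perp B P v ⊆ D ∩ D'

/-- `S` is (the set of real points of) a primitive sublattice of `L`. -/
def IsPrimSub (S : Submodule ℤ (Fin n → ℝ)) : Prop :=
  (∀ x ∈ S, isLat x) ∧
  ∀ x : Fin n → ℝ, isLat x → ∀ k : ℤ, k ≠ 0 → (k : ℝ) • x ∈ S → x ∈ S

/-- `xS` is the orthogonal projection of `x` to `S ⊗ ℚ`. -/
def IsProjS (B : Matrix (Fin n) (Fin n) ℤ) (S : Submodule ℤ (Fin n → ℝ))
    (xS x : Fin n → ℝ) : Prop :=
  xS ∈ Submodule.span ℚ (S : Set (Fin n → ℝ)) ∧ ∀ s ∈ S, pair B (x - xS) s = 0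

/-- The orthogonal complement `R = S⊥ ∩ L` of `S` in `L`. -/
def orthCompl (B : Matrix (Fin n) (Fin n) ℤ) (S : Submodule ℤ (Fin n → ℝ)) :
    Set (Fin n → ℝ) :=
  {x | isLat x ∧ ∀ s ∈ S, pair B x s = 0}

/-- `P` is a positive cone of the subspace `W`. -/
def IsPosConeIn (B : Matrix (Fin n) (Fin n) ℤ) (W : Set (Fin n → ℝ))
    (P : Set (Fin n → ℝ)) : Prop :=
  ∃ x ∈ W, 0 < pair B x x ∧ P = connectedComponentIn {y ∈ W | 0 < pair B y y} x


/-- The bilinear form on `L ⊗ ℝ` for `L = U ⊕ Λ₀`, where `U` has basis `f, z`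
with `f² = 0`, `⟨f,z⟩ = 1`, `z² = -2`, and `Λ₀` has Gram matrix `B₀`.
A vector `[s, t, y]` is represented as `(s, t, y) : ℝ × ℝ × (Fin 24 → ℝ)`. -/
def formU (B₀ : Matrix (Fin 24) (Fin 24) ℤ) (u v : ℝ × ℝ × (Fin 24 → ℝ)) : ℝ :=
  u.1 * v.2.1 + u.2.1 * v.1 - 2 * u.2.1 * v.2.1 + pair B₀ u.2.2 v.2.2

lemma pair_zero_right (B : Matrix (Fin n) (Fin n) ℤ) (x : Fin n → ℝ) :
    pair B x 0 = 0 := by simp [pair]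

lemma pair_comm {B : Matrix (Fin n) (Fin n) ℤ} (hsymm : B.IsSymm)
    (x y : Fin n → ℝ) : pair B x y = pair B y x := by
  unfold pair
  rw [Finset.sum_comm]
  refine Finset.sum_congr rfl fun i _ => Finset.sum_congr rfl fun j _ => ?_
  rw [← hsymm.apply i j]
  ring

lemma pair_smul_left (B : Matrix (Fin n) (Fin n) ℤ) (a : ℝ) (x y : Fin n → ℝ) :
    pair B (a • x) y = a * pair B x y := by
  simp only [pair, Pi.smul_apply, smul_eq_mul, Finset.mul_sum]
  exact Finset.sum_congr rfl fun i _ => Finset.sum_congr rfl fun j _ => by ring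

lemma pair_smul_right (B : Matrix (Fin n) (Fin n) ℤ) (a : ℝ) (x y : Fin n → ℝ) :
    pair B x (a • y) = a * pair B x y := by
  simp only [pair, Pi.smul_apply, smul_eq_mul, Finset.mul_sum]
  exact Finset.sum_congr rfl fun i _ => Finset.sum_congr rfl fun j _ => by ring

lemma pair_sub_left (B : Matrix (Fin n) (Fin n) ℤ) (x y z : Fin n → ℝ) :
    pair B (x - y) z = pair B x z - pair B y z := by
  simp only [pair, Pi.sub_apply, ← Finset.sum_sub_distrib]
  exact Finset.sum_congr rfl fun i _ => Finset.sum_congr rfl fun j _ => by ring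

lemma pair_sub_right (B : Matrix (Fin n) (Fin n) ℤ) (x y z : Fin n → ℝ) :
    pair B x (y - z) = pair B x y - pair B x z := by
  simp only [pair, Pi.sub_apply, ← Finset.sum_sub_distrib]
  exact Finset.sum_congr rfl fun i _ => Finset.sum_congr rfl fun j _ => by ring

lemma pair_expand {B : Matrix (Fin n) (Fin n) ℤ} (hsymm : B.IsSymm)
    (a : ℝ) (y l : Fin n → ℝ) :
    pair B (a • y - l) (a • y - l) =
      a * a * pair B y y - 2 * a * pair B y l + pair B l l := by
  rw [pair_sub_left, pair_sub_right, pair_sub_right, pair_smul_left,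
    pair_smul_left, pair_smul_right, pair_smul_right, pair_comm hsymm l y]
  ring

/-- **boundary points of a Conway chamber.**  Let `Λ₀` be a
Leech lattice (even, unimodular, negative definite of rank 24, without
`(-2)`-vectors) and `L = U ⊕ Λ₀` with `P_L` the positive cone containing
`2f + z`.  If `u` is a nonzero isotropic vector of the closure of `P_L` with
`⟨u, r_λ⟩ ≥ 0` for all `λ ∈ Λ₀`, then either `u ∈ ℝ≥0·f`, or `u` is a positive
multiple of `[-c²/2 + 1, 1, c]` for some deep hole `c` of `Λ₀`. -/
theorem statement_13 (B₀ : Matrix (Fin 24) (Fin 24) ℤ)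
    (hsymm : B₀.IsSymm) (heven : ∀ i, Even (B₀ i i)) (huni : IsUnit B₀.det)
    (hneg : ∀ x : Fin 24 → ℝ, x ≠ 0 → pair B₀ x x < 0)
    (hnoroots : ∀ x : Fin 24 → ℝ, isLat x → pair B₀ x x ≠ -2)
    (P : Set (ℝ × ℝ × (Fin 24 → ℝ)))
    (hP : P = connectedComponentIn {u | 0 < formU B₀ u u}
      ((2 : ℝ), (1 : ℝ), (0 : Fin 24 → ℝ)))
    (u : ℝ × ℝ × (Fin 24 → ℝ)) (hu0 : u ≠ 0) (huP : u ∈ closure P)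
    (huu : formU B₀ u u = 0)
    (hur : ∀ l : Fin 24 → ℝ, isLat l →
      0 ≤ formU B₀ u ((-(pair B₀ l l) / 2 : ℝ), (1 : ℝ), l)) :
    (∃ t : ℝ, 0 ≤ t ∧ u = t • ((1 : ℝ), (0 : ℝ), (0 : Fin 24 → ℝ))) ∨
    (∃ t : ℝ, 0 < t ∧ ∃ c : Fin 24 → ℝ,
      (∀ l : Fin 24 → ℝ, isLat l → 2 ≤ -pair B₀ (c - l) (c - l)) ∧
      u = t • ((-(pair B₀ c c) / 2 + 1 : ℝ), (1 : ℝ), c)) := by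
  have hnegsemi : ∀ v : Fin 24 → ℝ, pair B₀ v v ≤ 0 := by
    intro v
    by_cases hv : v = 0
    · simp [hv, pair]
    · exact (hneg v hv).le
  -- a vector with vanishing `f`-coordinate has nonpositive norm
  have hker : ∀ w : ℝ × ℝ × (Fin 24 → ℝ), w.2.1 = 0 → formU B₀ w w ≤ 0 := by
    intro w hw
    have : formU B₀ w w = pair B₀ w.2.2 w.2.2 := by simp [formU, hw]
    rw [this]; exact hnegsemi _
  have hφ : Continuous fun x : ℝ × ℝ × (Fin 24 → ℝ) => x.2.1 :=
    continuous_fst.comp continuous_snd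
  -- every point of P has positive f-coordinate
  have hx₀S : ((2 : ℝ), (1 : ℝ), (0 : Fin 24 → ℝ)) ∈ {u | 0 < formU B₀ u u} := by
    simp [Set.mem_setOf_eq, formU, pair]
  have hpos : ∀ x ∈ P, 0 < x.2.1 := by
    intro x hx
    rw [hP] at hx
    by_contra hle
    push_neg at hle
    have hconn : IsPreconnected (connectedComponentIn {u | 0 < formU B₀ u u}
        ((2 : ℝ), (1 : ℝ), (0 : Fin 24 → ℝ))) :=
      (isPreconnected_connectedComponentIn)
    have hsub := connectedComponentIn_subset {u | 0 < formU B₀ u u}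
      ((2 : ℝ), (1 : ℝ), (0 : Fin 24 → ℝ))
    have hxne : x.2.1 ≠ 0 := by
      intro h
      exact absurd (hsub hx) (by simpa using (hker x h).not_gt)
    have h0mem : (0 : ℝ) ∈ (fun x : ℝ × ℝ × (Fin 24 → ℝ) => x.2.1) ''
        connectedComponentIn {u | 0 < formU B₀ u u}
          ((2 : ℝ), (1 : ℝ), (0 : Fin 24 → ℝ)) := by
      refine hconn.intermediate_value hx (mem_connectedComponentIn hx₀S)
        hφ.continuousOn ⟨hle, by norm_num⟩
    obtain ⟨w, hw, hw0⟩ := h0mem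
    exact absurd (hsub hw) (by simpa using (hker w hw0).not_gt)
  have ht0 : 0 ≤ u.2.1 := by
    have : closure P ⊆ {x : ℝ × ℝ × (Fin 24 → ℝ) | 0 ≤ x.2.1} :=
      closure_minimal (fun x hx => (hpos x hx).le) (isClosed_le continuous_const hφ)
    exact this huP
  obtain ⟨s, t, y⟩ := u
  simp only at ht0
  rcases eq_or_lt_of_le ht0 with ht | ht
  · -- t = 0 : u is a multiple of f
    left
    have hyy : pair B₀ y y = 0 := by
      have := huu
      simp only [formU, ← ht] at this
      linarith [this]
    have hy0 : y = 0 := by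
      by_contra hy
      exact absurd hyy (hneg y hy).ne
    have hs : 0 ≤ s := by
      have h := hur 0 (fun i => ⟨0, by norm_num⟩)
      simpa [formU, pair_zero_right, ← ht] using h
    refine ⟨s, hs, ?_⟩
    simp [Prod.ext_iff, ← ht, hy0]
  · -- t > 0 : deep hole case
    right
    refine ⟨t, ht, t⁻¹ • y, ?_, ?_⟩
    · intro l hl
      have h := hur l hl
      simp only [formU] at h huu
      rw [pair_expand hsymm]
      have h2 : s * t + t * s - 2 * t * t + pair B₀ y y = 0 := huu
      have key : pair B₀ y y - 2 * t * pair B₀ y l + t * t * pair B₀ l l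
          ≤ -2 * (t * t) := by nlinarith [mul_nonneg ht.le h, h2]
      have h4 := mul_le_mul_of_nonneg_left key
        (by positivity : (0:ℝ) ≤ t⁻¹ * t⁻¹)
      have h5 : t⁻¹ * t⁻¹ * (pair B₀ y y - 2 * t * pair B₀ y l
          + t * t * pair B₀ l l)
          = t⁻¹ * t⁻¹ * pair B₀ y y - 2 * t⁻¹ * pair B₀ y l + pair B₀ l l := by
        field_simp
      have h6 : t⁻¹ * t⁻¹ * (-2 * (t * t)) = -2 := by field_simp
      rw [h5, h6] at h4
      linarith
    · have h2 : s * t + t * s - 2 * t * t + pair B₀ y y = 0 := huu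
      have hti : t * t⁻¹ = 1 := mul_inv_cancel₀ ht.ne'
      rw [pair_smul_left, pair_smul_right]
      refine Prod.ext ?_ (Prod.ext ?_ ?_)
      · show s = t * (-(t⁻¹ * (t⁻¹ * pair B₀ y y)) / 2 + 1)
        field_simp
        nlinarith
      · simp
      · show y = t • t⁻¹ • y
        rw [smul_smul, mul_inv_cancel₀ ht.ne', one_smul]

end K3Aut
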